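/- With the correlation-breaking variables (D, G, Y) as above (anchored distribution with parameter ζ), the probability, conditioned on D=1, that Y ≠ G equals (1-ζ)^{2/3}·(1-(1-ζ)^{1/3}), and this is at most ζ/3. -/
import Mathlib


/-- In the correlation-breaking construction, conditioned on `D = 1`
(an event of probability `1/2`), the probability that `Y ≠ G` equals
`(1-ζ)^{2/3}·(1-(1-ζ)^{1/3})`, and this quantity is at most `ζ/3` for all `ζ ∈ [0,1]`. -/
theorem stmt12 {X Y : Type*} [Fintype X] [Fintype Y] [DecidableEq X] [DecidableEq Y]
    (ζ : ℝ) (hζ0 : 0 < ζ) (hζ1 : ζ < 1)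
    (p : X × Y → ℝ) (hp0 : ∀ a, 0 ≤ p a) (hp1 : ∑ a, p a = 1)
    (pX : X → ℝ) (hpX : ∀ x, pX x = ∑ y, p (x, y))
    (pY : Y → ℝ) (hpY : ∀ y, pY y = ∑ x, p (x, y))
    (J1 : Option Y × X × Option Y → ℝ)
    -- `J1 (g, x, y)` is the (unnormalized) joint weight of `(G, X, Y) = (g, x, y)`
    -- together with the event `D = 1`:
    (hJ1 : ∀ g x yo, J1 (g, x, yo) =
      match g with
      | none =>
          (1 / 2) * (1 - (1 - ζ) ^ ((2 : ℝ) / 3)) * pX x *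
            (if yo = none then 1 else 0)
      | some gy =>
          (1 / 2) * ((1 - ζ) ^ ((2 : ℝ) / 3) * pY gy) * (p (x, gy) / pY gy) *
            (match yo with
              | none => 1 - (1 - ζ) ^ ((1 : ℝ) / 3)
              | some y => if y = gy then (1 - ζ) ^ ((1 : ℝ) / 3) else 0)) :
    2 * (∑ g : Option Y, ∑ x : X, ∑ yo : Option Y,
          if yo ≠ g then J1 (g, x, yo) else 0)
        = (1 - ζ) ^ ((2 : ℝ) / 3) * (1 - (1 - ζ) ^ ((1 : ℝ) / 3)) ∧
    (∀ ξ : ℝ, 0 ≤ ξ → ξ ≤ 1 →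
      (1 - ξ) ^ ((2 : ℝ) / 3) * (1 - (1 - ξ) ^ ((1 : ℝ) / 3)) ≤ ξ / 3) := by
  constructor
  · have hsum : (∑ g : Option Y, ∑ x : X, ∑ yo : Option Y,
        if yo ≠ g then J1 (g, x, yo) else 0)
        = (1 / 2) * ((1 - ζ) ^ ((2 : ℝ) / 3) * (1 - (1 - ζ) ^ ((1 : ℝ) / 3))) := by
      rw [Fintype.sum_option]
      have h0 : (∑ x : X, ∑ yo : Option Y,
          if yo ≠ (none : Option Y) then J1 (none, x, yo) else 0) = 0 := by
        apply Finset.sum_eq_zero; intro x _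
        apply Finset.sum_eq_zero; intro yo _
        rcases yo with _ | y
        · simp
        · simp [hJ1]
      rw [h0, zero_add]
      have h1 : ∀ gy : Y, (∑ x : X, ∑ yo : Option Y,
          if yo ≠ some gy then J1 (some gy, x, yo) else 0)
          = (1 / 2) * ((1 - ζ) ^ ((2 : ℝ) / 3) * (1 - (1 - ζ) ^ ((1 : ℝ) / 3))) * pY gy := by
        intro gy
        have hx : ∀ x : X, (∑ yo : Option Y,
            if yo ≠ some gy then J1 (some gy, x, yo) else 0)
            = (1 / 2) * ((1 - ζ) ^ ((2 : ℝ) / 3) * pY gy) * (p (x, gy) / pY gy) *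
              (1 - (1 - ζ) ^ ((1 : ℝ) / 3)) := by
          intro x
          rw [Fintype.sum_option]
          have hy : (∑ y : Y, if (some y : Option Y) ≠ some gy
              then J1 (some gy, x, some y) else 0) = 0 := by
            apply Finset.sum_eq_zero; intro y _
            by_cases h : y = gy
            · simp [h]
            · simp [hJ1, h]
          rw [hy, add_zero]
          simp [hJ1]
        simp only [hx]
        have step : (∑ x : X, (1 / 2) * ((1 - ζ) ^ ((2 : ℝ) / 3) * pY gy) *
              (p (x, gy) / pY gy) * (1 - (1 - ζ) ^ ((1 : ℝ) / 3)))
            = (1 / 2) * ((1 - ζ) ^ ((2 : ℝ) / 3) * pY gy) * ((pY gy)⁻¹ *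
              (1 - (1 - ζ) ^ ((1 : ℝ) / 3))) * (∑ x : X, p (x, gy)) := by
          rw [Finset.mul_sum]
          apply Finset.sum_congr rfl
          intro x _
          field_simp
        rw [step, ← hpY]
        rcases eq_or_ne (pY gy) 0 with h | h
        · simp [h]
        · field_simp
      simp only [h1]
      rw [← Finset.mul_sum]
      have : (∑ gy : Y, pY gy) = 1 := by
        simp only [hpY]
        rw [← hp1, ← Finset.sum_product']
        exact Finset.sum_nbij' (fun a => (a.2, a.1)) (fun a => (a.2, a.1))
          (by simp) (by simp) (by simp) (by simp) (by simp)
      rw [this, mul_one]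
    rw [hsum]; ring
  · intro ξ h0 h1
    set u := (1 - ξ) ^ ((1 : ℝ) / 3) with hu
    have h1ξ : (0:ℝ) ≤ 1 - ξ := by linarith
    have hu0 : 0 ≤ u := Real.rpow_nonneg h1ξ _
    have hu3 : u ^ 3 = 1 - ξ := by
      rw [hu, ← Real.rpow_natCast ((1-ξ) ^ ((1:ℝ)/3)) 3, ← Real.rpow_mul h1ξ]
      norm_num
    have hu2 : (1 - ξ) ^ ((2 : ℝ) / 3) = u ^ 2 := by
      rw [hu, ← Real.rpow_natCast ((1-ξ) ^ ((1:ℝ)/3)) 2, ← Real.rpow_mul h1ξ]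
      norm_num
    have hu1 : u ≤ 1 := by nlinarith
    rw [hu2]
    nlinarith [sq_nonneg (1 - u), mul_nonneg (mul_nonneg hu0 hu0) hu0]
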